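/- Let v ≤ w in S_{n+1} (Bruhat order) and let w_0 ∈ S_{n+1} be the longest element, w_0(i) = n+2−i. Then the affine involution ι : ℝ^{n+1} → ℝ^{n+1} given by ι(x_1,…,x_{n+1}) = (n+2−x_{n+1}, n+2−x_n, …, n+2−x_1) maps the Bruhat interval polytope Q_{v,w} bijectively onto the Bruhat interval polytope Q_{w_0 v w_0, w_0 w w_0}; in particular w_0 v w_0 ≤ w_0 w w_0 and Q_{v,w} and Q_{w_0 v w_0, w_0 w w_0} are isomorphic as lattice polytopes. -/

import Mathlib

/-- `w : ℕ → ℕ` represents a permutation of `{1,…,m}` (extended by the identity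
elsewhere); this encodes an element of the symmetric group `S_m`. -/
def IsPermOn (m : ℕ) (w : ℕ → ℕ) : Prop :=
  Set.BijOn w (Set.Icc 1 m) (Set.Icc 1 m) ∧ ∀ x, x ∉ Set.Icc 1 m → w x = x

/-- The increasing rearrangement of `(w(1), …, w(i))`. -/
def sortedInit (w : ℕ → ℕ) (i : ℕ) : List ℕ :=
  Multiset.sort ((Multiset.range i).map fun j => w (j + 1)) (· ≤ ·)

/-- The (strong) Bruhat order on `S_m`: `v ≤ w` iff for every `1 ≤ i ≤ m` the increasing
rearrangement of `(v(1),…,v(i))` is componentwise `≤` that of `(w(1),…,w(i))`. -/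
def bruhatLE (m : ℕ) (v w : ℕ → ℕ) : Prop :=
  ∀ i, 1 ≤ i → i ≤ m → List.Forall₂ (· ≤ ·) (sortedInit v i) (sortedInit w i)

/-- The Bruhat interval polytope `Q_{v,w} ⊆ ℝ^{n+1}`: the convex hull of the points
`(z(1),…,z(n+1))` for all permutations `z ∈ S_{n+1}` with `v ≤ z ≤ w`. -/
def BIP (n : ℕ) (v w : ℕ → ℕ) : Set (Fin (n + 1) → ℝ) :=
  convexHull ℝ {p | ∃ z : ℕ → ℕ, IsPermOn (n + 1) z ∧
    bruhatLE (n + 1) v z ∧ bruhatLE (n + 1) z w ∧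
    p = fun i : Fin (n + 1) => (z ((i : ℕ) + 1) : ℝ)}

/-- The longest element `w₀ ∈ S_{n+1}`, `w₀(i) = n+2−i`. -/
def longestElt (n : ℕ) : ℕ → ℕ := fun i => if 1 ≤ i ∧ i ≤ n + 1 then n + 2 - i else i

/-!
Write `N_z(i, t)` for the number of `k ≤ i` with `z(k) ≤ t`. Comparing sorted lists through
their counting functions turns the definition of the Bruhat order into the criterion
`v ≤ w ↔ N_w(i, t) ≤ N_v(i, t)` for all `i ≤ n + 1` and all `t`. Conjugation by `w₀` reverses
both positions and values, and a complement count gives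
`N_{w₀zw₀}(i, t) + (n + 1 - i) = c(n, t) + N_z(n + 1 - i, n + 1 - t)` with `c` independent of `z`,
so the criterion is preserved: `z ↦ w₀zw₀` is an automorphism of the Bruhat order. The map `ι`
is affine, involutive, and sends the vertex `(z(1), …, z(n+1))` to the vertex of `w₀zw₀`, so it
maps the convex hull of the vertices of `[v, w]` onto that of `[w₀vw₀, w₀ww₀]`.
-/

open Finset

def initCountLE (z : ℕ → ℕ) (i t : ℕ) : ℕ := #{k ∈ Icc 1 i | z k ≤ t}

theorem countP_sortedInit (z : ℕ → ℕ) (i t : ℕ) :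
    (sortedInit z i).countP (· ≤ t) = initCountLE z i t := by
  rw [← Multiset.coe_countP, sortedInit, Multiset.sort_eq, Multiset.countP_map]
  change #{j ∈ range i | z (j + 1) ≤ t} = _
  refine card_nbij' (· + 1) (· - 1) ?_ ?_ ?_ ?_ <;> intro k <;> simp
  · exact fun h1 _ _ => ⟨by omega, by rwa [Nat.sub_add_cancel h1]⟩
  · omega

theorem sortedLE_sortedInit (z : ℕ → ℕ) (i : ℕ) : (sortedInit z i).SortedLE :=
  (Multiset.pairwise_sort _ _).sortedLE

theorem length_sortedInit (z : ℕ → ℕ) (i : ℕ) : (sortedInit z i).length = i := by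
  simp [sortedInit]

namespace List

variable {α : Type*} [LinearOrder α] {L L' : List α}

theorem Forall₂.countP_le_antitone (h : Forall₂ (· ≤ ·) L L') (t : α) :
    L'.countP (· ≤ t) ≤ L.countP (· ≤ t) := by
  induction h with
  | nil => simp
  | @cons a b l l' hab _ ih =>
    simp only [countP_cons]
    by_cases hb : b ≤ t
    · simp [hb, hab.trans hb, ih]
    · simpa [hb] using ih.trans (Nat.le_add_right _ _)

theorem SortedLE.succ_le_countP_le_getElem (hL : L.SortedLE) {j : ℕ} (hj : j < L.length) :
    j + 1 ≤ L.countP (· ≤ L[j]) := by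
  have htake : (L.take (j + 1)).countP (· ≤ L[j]) = j + 1 := by
    rw [countP_eq_length.2, length_take]
    · omega
    intro a ha
    obtain ⟨k, hk, rfl⟩ := mem_take_iff_getElem.1 ha
    simpa using hL.getElem_le_getElem_of_le (by omega : k ≤ j)
  exact htake ▸ (take_sublist _ _).countP_le

theorem SortedLE.countP_le_le_of_lt_getElem (hL : L.SortedLE) {j : ℕ} (hj : j < L.length) {t : α}
    (ht : t < L[j]) : L.countP (· ≤ t) ≤ j := by
  have hdrop : (L.drop j).countP (· ≤ t) = 0 := by
    refine countP_eq_zero.2 fun a ha => ?_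
    obtain ⟨k, hk, rfl⟩ := mem_drop_iff_getElem.1 ha
    simpa using ht.trans_le (hL.getElem_le_getElem_of_le (by omega : j ≤ j + k))
  have htake : (L.take j).countP (· ≤ t) ≤ j := countP_le_length.trans (by simp)
  rw [← take_append_drop j L, countP_append]
  omega

theorem forall₂_le_iff_countP_le (hL : L.SortedLE) (hL' : L'.SortedLE)
    (hlen : L.length = L'.length) :
    Forall₂ (· ≤ ·) L L' ↔ ∀ t, L'.countP (· ≤ t) ≤ L.countP (· ≤ t) := by
  refine ⟨fun h t => h.countP_le_antitone t, fun h => forall₂_iff_get.2 ⟨hlen, fun j hj hj' => ?_⟩⟩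
  by_contra! hlt
  have hL'j := hL'.succ_le_countP_le_getElem hj'
  have hLj := hL.countP_le_le_of_lt_getElem hj hlt
  have := h L'[j]
  simp only [get_eq_getElem] at *
  omega

end List

theorem bruhatLE_iff_initCountLE {m : ℕ} {v w : ℕ → ℕ} :
    bruhatLE m v w ↔ ∀ i ≤ m, ∀ t, initCountLE w i t ≤ initCountLE v i t := by
  have key : ∀ i, List.Forall₂ (· ≤ ·) (sortedInit v i) (sortedInit w i) ↔
      ∀ t, initCountLE w i t ≤ initCountLE v i t := fun i => by
    simp only [← countP_sortedInit]
    exact List.forall₂_le_iff_countP_le (sortedLE_sortedInit v i) (sortedLE_sortedInit w i)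
      (by simp only [length_sortedInit])
  simp only [bruhatLE, key]
  refine ⟨fun h i hi t => ?_, fun h i _ hi => h i hi⟩
  rcases Nat.eq_zero_or_pos i with rfl | hpos
  · simp [initCountLE]
  · exact h i hpos hi t

namespace IsPermOn

variable {m : ℕ} {z z' : ℕ → ℕ}

theorem mem_Icc (hz : IsPermOn m z) {k : ℕ} (hk : k ∈ Set.Icc 1 m) : z k ∈ Set.Icc 1 m :=
  hz.1.mapsTo hk

theorem comp (hz : IsPermOn m z) (hz' : IsPermOn m z') : IsPermOn m (z ∘ z') :=
  ⟨hz.1.comp hz'.1, fun k hk => by simp only [Function.comp_apply, hz'.2 k hk, hz.2 k hk]⟩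

theorem card_filter_comp (hz : IsPermOn m z) (p : ℕ → Prop) [DecidablePred p] :
    #{k ∈ Icc 1 m | p (z k)} = #{k ∈ Icc 1 m | p k} := by
  have himage : (Icc 1 m).image z = Icc 1 m := coe_injective (by simpa using hz.1.image_eq)
  have hinj : Set.InjOn z (({k ∈ Icc 1 m | p (z k)} : Finset ℕ) : Set ℕ) :=
    hz.1.injOn.mono fun k hk => by simpa using (mem_filter.1 hk).1
  rw [← card_image_of_injOn hinj, ← filter_image, himage]

end IsPermOn

theorem longestElt_of_mem_Icc {n k : ℕ} (hk : k ∈ Set.Icc 1 (n + 1)) :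
    longestElt n k = n + 2 - k :=
  if_pos hk

theorem longestElt_involutive (n : ℕ) : Function.Involutive (longestElt n) := fun k => by
  unfold longestElt
  split_ifs <;> omega

theorem isPermOn_longestElt (n : ℕ) : IsPermOn (n + 1) (longestElt n) := by
  have hmaps : Set.MapsTo (longestElt n) (Set.Icc 1 (n + 1)) (Set.Icc 1 (n + 1)) := fun k hk => by
    rw [longestElt_of_mem_Icc hk]
    simp only [Set.mem_Icc] at hk ⊢
    omega
  refine ⟨Set.InvOn.bijOn ⟨?_, ?_⟩ hmaps hmaps, fun k hk => if_neg hk⟩ <;>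
    exact fun k _ => longestElt_involutive n k

theorem card_filter_Icc_eq_add (p : ℕ → Prop) [DecidablePred p] {a b : ℕ} (h : a ≤ b) :
    #{k ∈ Icc 1 b | p k} = #{k ∈ Icc 1 a | p k} + #{k ∈ Icc (a + 1) b | p k} := by
  have hunion : Icc 1 a ∪ Icc (a + 1) b = Icc 1 b := by
    ext k
    simp only [mem_union, mem_Icc]
    omega
  rw [← hunion, filter_union, card_union_of_disjoint (disjoint_filter_filter ?_)]
  exact disjoint_left.2 fun k hk hk' => by
    simp only [mem_Icc] at hk hk'
    omega

theorem card_filter_lt_add_initCountLE (z : ℕ → ℕ) (a t : ℕ) :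
    #{k ∈ Icc 1 a | t < z k} + initCountLE z a t = a := by
  simp_rw [initCountLE, ← not_lt]
  rw [card_filter_add_card_filter_not, Nat.card_Icc, Nat.add_sub_cancel]

section Conjugation

variable {n : ℕ} {z : ℕ → ℕ}

theorem IsPermOn.conj (hz : IsPermOn (n + 1) z) :
    IsPermOn (n + 1) (longestElt n ∘ z ∘ longestElt n) :=
  (isPermOn_longestElt n).comp (hz.comp (isPermOn_longestElt n))

theorem conj_conj :
    longestElt n ∘ (longestElt n ∘ z ∘ longestElt n) ∘ longestElt n = z := by
  funext k
  simp only [Function.comp_apply, longestElt_involutive n _]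

theorem initCountLE_conj (hz : IsPermOn (n + 1) z) {i : ℕ} (hi : i ≤ n + 1) (t : ℕ) :
    initCountLE (longestElt n ∘ z ∘ longestElt n) i t
      = #{k ∈ Icc (n + 1 - i + 1) (n + 1) | n + 1 - t < z k} := by
  refine card_nbij' (n + 2 - ·) (n + 2 - ·) ?_ ?_ ?_ ?_ <;> intro k hk <;>
    simp only [coe_filter, Set.mem_ofPred_eq, mem_Icc] at hk ⊢
  · have hzk := hz.mem_Icc (k := n + 2 - k) ⟨by omega, by omega⟩
    simp only [Function.comp_apply, longestElt_of_mem_Icc ⟨hk.1.1, hk.1.2.trans hi⟩,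
      longestElt_of_mem_Icc hzk] at hk
    simp only [Set.mem_Icc] at hzk
    omega
  · have hzk := hz.mem_Icc (k := k) ⟨by omega, hk.1.2⟩
    have hk' : n + 2 - (n + 2 - k) = k := by omega
    have hk'' : n + 2 - k ∈ Set.Icc 1 (n + 1) := ⟨by omega, by omega⟩
    simp only [Function.comp_apply, longestElt_of_mem_Icc hk'', hk', longestElt_of_mem_Icc hzk]
    simp only [Set.mem_Icc] at hzk
    omega
  · omega
  · omega

theorem initCountLE_conj_add (hz : IsPermOn (n + 1) z) {i : ℕ} (hi : i ≤ n + 1) (t : ℕ) :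
    initCountLE (longestElt n ∘ z ∘ longestElt n) i t + (n + 1 - i)
      = #{k ∈ Icc 1 (n + 1) | n + 1 - t < k} + initCountLE z (n + 1 - i) (n + 1 - t) := by
  have hsplit := card_filter_Icc_eq_add (n + 1 - t < z ·) (Nat.sub_le (n + 1) i)
  have hcompl := card_filter_lt_add_initCountLE z (n + 1 - i) (n + 1 - t)
  rw [initCountLE_conj hz hi, ← hz.card_filter_comp (n + 1 - t < ·)]
  omega

theorem bruhatLE_conj {v w : ℕ → ℕ} (hv : IsPermOn (n + 1) v) (hw : IsPermOn (n + 1) w)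
    (h : bruhatLE (n + 1) v w) :
    bruhatLE (n + 1) (longestElt n ∘ v ∘ longestElt n) (longestElt n ∘ w ∘ longestElt n) := by
  rw [bruhatLE_iff_initCountLE] at h ⊢
  intro i hi t
  have hvw := h (n + 1 - i) (Nat.sub_le _ _) (n + 1 - t)
  have hv' := initCountLE_conj_add hv hi t
  have hw' := initCountLE_conj_add hw hi t
  omega

theorem bruhatLE_conj_iff {v w : ℕ → ℕ} (hv : IsPermOn (n + 1) v) (hw : IsPermOn (n + 1) w) :
    bruhatLE (n + 1) (longestElt n ∘ v ∘ longestElt n) (longestElt n ∘ w ∘ longestElt n) ↔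
      bruhatLE (n + 1) v w :=
  ⟨fun h => by simpa only [conj_conj] using bruhatLE_conj hv.conj hw.conj h, bruhatLE_conj hv hw⟩

end Conjugation

def permVector (n : ℕ) (z : ℕ → ℕ) : Fin (n + 1) → ℝ := fun i => (z (i + 1) : ℝ)

def bruhatIntervalVertices (n : ℕ) (v w : ℕ → ℕ) : Set (Fin (n + 1) → ℝ) :=
  {p | ∃ z : ℕ → ℕ, IsPermOn (n + 1) z ∧ bruhatLE (n + 1) v z ∧ bruhatLE (n + 1) z w ∧
    p = permVector n z}

noncomputable def reflectRev (n : ℕ) : (Fin (n + 1) → ℝ) →ᵃ[ℝ] (Fin (n + 1) → ℝ) :=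
  AffineMap.const ℝ _ (fun _ => (n + 2 : ℝ)) - (LinearMap.funLeft ℝ ℝ Fin.rev).toAffineMap

theorem coe_reflectRev (n : ℕ) : ⇑(reflectRev n) = fun x i => (n + 2 : ℝ) - x i.rev := rfl

theorem reflectRev_involutive (n : ℕ) : Function.Involutive (reflectRev n) := fun x => by
  funext i
  simp [coe_reflectRev]

theorem reflectRev_permVector {n : ℕ} {z : ℕ → ℕ} (hz : IsPermOn (n + 1) z) :
    reflectRev n (permVector n z) = permVector n (longestElt n ∘ z ∘ longestElt n) := by
  funext i
  have hi : (i : ℕ) + 1 ∈ Set.Icc 1 (n + 1) := ⟨by omega, by omega⟩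
  have hrev : (i.rev : ℕ) + 1 = n + 2 - ((i : ℕ) + 1) := by rw [Fin.val_rev]; omega
  have hzi := hz.mem_Icc (k := n + 2 - ((i : ℕ) + 1)) ⟨by omega, by omega⟩
  simp only [coe_reflectRev, permVector, Function.comp_apply, hrev, longestElt_of_mem_Icc hi,
    longestElt_of_mem_Icc hzi]
  rw [Nat.cast_sub (hzi.2.trans (Nat.le_succ _))]
  push_cast
  ring

theorem image_reflectRev_bruhatIntervalVertices {n : ℕ} {v w : ℕ → ℕ} (hv : IsPermOn (n + 1) v)
    (hw : IsPermOn (n + 1) w) :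
    reflectRev n '' bruhatIntervalVertices n v w =
      bruhatIntervalVertices n (longestElt n ∘ v ∘ longestElt n)
        (longestElt n ∘ w ∘ longestElt n) := by
  ext p
  constructor
  · rintro ⟨_, ⟨z, hz, hvz, hzw, rfl⟩, rfl⟩
    exact ⟨_, hz.conj, bruhatLE_conj hv hz hvz, bruhatLE_conj hz hw hzw, reflectRev_permVector hz⟩
  · rintro ⟨z, hz, hvz, hzw, rfl⟩
    refine ⟨_, ⟨_, hz.conj, ?_, ?_, rfl⟩, ?_⟩
    · rwa [← bruhatLE_conj_iff hv hz.conj, conj_conj]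
    · rwa [← bruhatLE_conj_iff hz.conj hw, conj_conj]
    · rw [reflectRev_permVector hz.conj, conj_conj]

theorem image_reflectRev_BIP {n : ℕ} {v w : ℕ → ℕ} (hv : IsPermOn (n + 1) v)
    (hw : IsPermOn (n + 1) w) :
    reflectRev n '' BIP n v w =
      BIP n (longestElt n ∘ v ∘ longestElt n) (longestElt n ∘ w ∘ longestElt n) := by
  rw [BIP, AffineMap.image_convexHull]
  exact congrArg _ (image_reflectRev_bruhatIntervalVertices hv hw)

/-- The affine involution `ι(x₁,…,x_{n+1}) = (n+2−x_{n+1}, …, n+2−x₁)` of `ℝ^{n+1}`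
maps `Q_{v,w}` bijectively onto `Q_{w₀vw₀, w₀ww₀}`; in particular `w₀vw₀ ≤ w₀ww₀`
(so the two Bruhat interval polytopes are isomorphic as lattice polytopes). -/
theorem stmt14 (n : ℕ) (v w : ℕ → ℕ) (hv : IsPermOn (n + 1) v) (hw : IsPermOn (n + 1) w)
    (hvw : bruhatLE (n + 1) v w) :
    bruhatLE (n + 1) (longestElt n ∘ v ∘ longestElt n) (longestElt n ∘ w ∘ longestElt n) ∧
    Set.BijOn (fun (x : Fin (n + 1) → ℝ) (i : Fin (n + 1)) => (n + 2 : ℝ) - x i.rev)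
      (BIP n v w)
      (BIP n (longestElt n ∘ v ∘ longestElt n) (longestElt n ∘ w ∘ longestElt n)) := by
  refine ⟨bruhatLE_conj hv hw hvw, ?_⟩
  rw [← coe_reflectRev, ← image_reflectRev_BIP hv hw]
  exact (reflectRev_involutive n).injective.injOn.bijOn_image
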